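/- arXiv:1812.11161 — 2 statements merged into one kernel-verified Lean document; each statement's English description precedes it below -/
import Mathlib

section
/- Let L : ℝ⁴ → ℝ be continuous with L(λy) = λ²L(y) for all λ > 0 and all y, and let T be a connected component of L⁻¹((0,∞)). Assume L is infinitely differentiable on the open set T and that for every y ∈ T the quadratic form v ↦ (1/2)·D²L(y)(v,v) on ℝ⁴ is nondegenerate of Lorentzian signature (+,−,−,−), i.e. linearly equivalent over ℝ to the form u₀² − u₁² − u₂² − u₃². Then T is a convex subset of ℝ⁴ (hence a convex cone). -/
open Set Filter Topology


set_option maxHeartbeats 1000000 in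
private lemma rcs (a0 a1 a2 a3 b0 b1 b2 b3 : ℝ)
    (h : 0 < a0^2 - a1^2 - a2^2 - a3^2) :
    (a0^2 - a1^2 - a2^2 - a3^2) * (b0^2 - b1^2 - b2^2 - b3^2)
      ≤ (a0*b0 - a1*b1 - a2*b2 - a3*b3)^2 := by
  obtain ⟨qa, hqa⟩ : ∃ c : ℝ, c = a0^2 - a1^2 - a2^2 - a3^2 := ⟨_, rfl⟩
  obtain ⟨qb, hqb⟩ : ∃ c : ℝ, c = b0^2 - b1^2 - b2^2 - b3^2 := ⟨_, rfl⟩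
  obtain ⟨qt, hqt⟩ : ∃ c : ℝ, c = a0*b0 - a1*b1 - a2*b2 - a3*b3 := ⟨_, rfl⟩
  obtain ⟨c0, hc0⟩ : ∃ c : ℝ, c = qa*b0 - qt*a0 := ⟨_, rfl⟩
  obtain ⟨c1, hc1⟩ : ∃ c : ℝ, c = qa*b1 - qt*a1 := ⟨_, rfl⟩
  obtain ⟨c2, hc2⟩ : ∃ c : ℝ, c = qa*b2 - qt*a2 := ⟨_, rfl⟩
  obtain ⟨c3, hc3⟩ : ∃ c : ℝ, c = qa*b3 - qt*a3 := ⟨_, rfl⟩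
  rw [← hqa, ← hqb, ← hqt]
  rw [← hqa] at h
  have horth2 : (a0*c0)^2 = (a1*c1 + a2*c2 + a3*c3)^2 := by
    rw [hc0, hc1, hc2, hc3, hqa, hqt]; ring
  have hCS : (a1*c1 + a2*c2 + a3*c3)^2 ≤ (a1^2+a2^2+a3^2) * (c1^2+c2^2+c3^2) := by
    nlinarith [sq_nonneg (a1*c2 - a2*c1), sq_nonneg (a1*c3 - a3*c1), sq_nonneg (a2*c3 - a3*c2)]
  have ha0 : a1^2+a2^2+a3^2 < a0^2 := by
    have h' : 0 < a0 ^ 2 - a1 ^ 2 - a2 ^ 2 - a3 ^ 2 := hqa ▸ h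
    linarith
  have hcc : (0:ℝ) ≤ c1^2+c2^2+c3^2 := by positivity
  have h1 : a0^2 * (c0^2 - (c1^2+c2^2+c3^2)) ≤ 0 := by nlinarith [horth2, hCS, hcc, ha0]
  have hqc : c0^2 - (c1^2+c2^2+c3^2) = qa * (qa * qb - qt^2) := by
    rw [hc0, hc1, hc2, hc3, hqa, hqb, hqt]; ring
  have ha0pos : 0 < a0^2 := by nlinarith [sq_nonneg a1, sq_nonneg a2, sq_nonneg a3]
  have h2 : a0^2 * (qa * (qa * qb - qt^2)) ≤ 0 := hqc ▸ h1
  nlinarith [h2, mul_pos ha0pos h]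

private lemma key {L : (Fin 4 → ℝ) → ℝ} {T : Set (Fin 4 → ℝ)}
    (hTo : IsOpen T)
    (hhom : ∀ l : ℝ, 0 < l → ∀ y : Fin 4 → ℝ, L (l • y) = l ^ 2 * L y)
    (hcone : ∀ l : ℝ, 0 < l → ∀ y ∈ T, l • y ∈ T)
    (hsmooth : ContDiffOn ℝ (⊤ : ℕ∞) L T)
    (hlor : ∀ y ∈ T, ∃ e : (Fin 4 → ℝ) ≃ₗ[ℝ] (Fin 4 → ℝ),
      ∀ v : Fin 4 → ℝ,
        (1 / 2) * fderiv ℝ (fun z => fderiv ℝ L z v) y v =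
          (e v 0) ^ 2 - (e v 1) ^ 2 - (e v 2) ^ 2 - (e v 3) ^ 2)
    (hpos : ∀ y ∈ T, 0 < L y)
    {p : Fin 4 → ℝ} (hp : p ∈ T) (v : Fin 4 → ℝ) :
    2 * L p * fderiv ℝ (fun z => fderiv ℝ L z v) p v ≤ (fderiv ℝ L p v)^2 := by
  have hdiff : ∀ z ∈ T, DifferentiableAt ℝ L z := fun z hz =>
    (hsmooth.contDiffAt (hTo.mem_nhds hz)).differentiableAt (by simp)
  have hCD : ContDiffAt ℝ (⊤ : ℕ∞) L p := hsmooth.contDiffAt (hTo.mem_nhds hp)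
  have hCD' : ContDiffAt ℝ 1 (fderiv ℝ L) p := hCD.fderiv_right (WithTop.coe_le_coe.mpr (le_top : (1:ℕ∞) + 1 ≤ ⊤))
  have hdF : DifferentiableAt ℝ (fderiv ℝ L) p := hCD'.differentiableAt one_ne_zero
  set A := fderiv ℝ (fderiv ℝ L) p with hA
  have hAder : HasFDerivAt (fderiv ℝ L) A p := hdF.hasFDerivAt
  have hev : ∀ᶠ z in 𝓝 p, HasFDerivAt L (fderiv ℝ L z) z := by
    filter_upwards [hTo.mem_nhds hp] with z hz using (hdiff z hz).hasFDerivAt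
  have hsymm : ∀ a b : Fin 4 → ℝ, A a b = A b a :=
    second_derivative_symmetric_of_eventually hev hAder
  have hBf : ∀ w : Fin 4 → ℝ, fderiv ℝ (fun z => fderiv ℝ L z w) p = A.flip w := by
    intro w
    have h := fderiv_clm_apply (c := fderiv ℝ L) (u := fun _ => w) hdF (differentiableAt_const w)
    simpa [fderiv_const] using h
  have hBapp : ∀ w a : Fin 4 → ℝ, fderiv ℝ (fun z => fderiv ℝ L z w) p a = A a w := by
    intro w a; rw [hBf w]; rfl
  -- Euler identities
  have hγ : HasDerivAt (fun l : ℝ => l • p) p 1 := by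
    simpa using (hasDerivAt_id (1:ℝ)).smul_const p
  have hφ : HasDerivAt (fun l : ℝ => L (l • p)) (fderiv ℝ L p p) 1 := by
    have h1 : HasFDerivAt L (fderiv ℝ L p) ((fun l : ℝ => l • p) 1) := by
      rw [show (fun l : ℝ => l • p) 1 = p by simp]
      exact (hdiff p hp).hasFDerivAt
    exact h1.comp_hasDerivAt 1 hγ
  have hφ' : HasDerivAt (fun l : ℝ => L (l • p)) (2 * L p) 1 := by
    have heq : (fun l : ℝ => L (l • p)) =ᶠ[𝓝 (1:ℝ)] (fun l => l ^ 2 * L p) := by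
      filter_upwards [Ioi_mem_nhds (zero_lt_one)] with l hl using hhom l hl p
    have h2 : HasDerivAt (fun l : ℝ => l ^ 2 * L p) (2 * L p) 1 := by
      simpa using (hasDerivAt_pow 2 (1:ℝ)).mul_const (L p)
    exact h2.congr_of_eventuallyEq heq
  have euler1 : fderiv ℝ L p p = 2 * L p := hφ.unique hφ'
  have hscale : ∀ l : ℝ, 0 < l → ∀ w, fderiv ℝ L (l • p) w = l * fderiv ℝ L p w := by
    intro l hl w
    have hfun : (fun z : Fin 4 → ℝ => L (l • z)) = (fun z => l ^ 2 * L z) :=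
      funext fun z => hhom l hl z
    have hs : HasFDerivAt (fun z : Fin 4 → ℝ => l • z)
        (l • ContinuousLinearMap.id ℝ (Fin 4 → ℝ)) p := by
      have h := (l • ContinuousLinearMap.id ℝ (Fin 4 → ℝ)).hasFDerivAt (x := p)
      simpa using h
    have hL1 : HasFDerivAt L (fderiv ℝ L (l • p)) (l • p) :=
      (hdiff _ (hcone l hl p hp)).hasFDerivAt
    have hcomp : HasFDerivAt (fun z : Fin 4 → ℝ => L (l • z))
        ((fderiv ℝ L (l • p)).comp (l • ContinuousLinearMap.id ℝ (Fin 4 → ℝ))) p :=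
      hL1.comp p hs
    have hrhs : HasFDerivAt (fun z : Fin 4 → ℝ => l ^ 2 * L z)
        ((l ^ 2 : ℝ) • fderiv ℝ L p) p := (hdiff p hp).hasFDerivAt.const_mul (l ^ 2)
    rw [hfun] at hcomp
    have hEq := hcomp.unique hrhs
    have happ := congrArg (fun M : (Fin 4 → ℝ) →L[ℝ] ℝ => M w) hEq
    simp at happ
    have hl0 : l ≠ 0 := ne_of_gt hl
    apply mul_left_cancel₀ hl0
    rw [happ]; ring
  have euler2 : ∀ w, A p w = fderiv ℝ L p w := by
    intro w
    have hGdiff : DifferentiableAt ℝ (fun z => fderiv ℝ L z w) p :=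
      hdF.clm_apply (differentiableAt_const w)
    have hGf : HasFDerivAt (fun z => fderiv ℝ L z w) (A.flip w) p := by
      rw [← hBf w]; exact hGdiff.hasFDerivAt
    have hψ : HasDerivAt (fun l : ℝ => fderiv ℝ L (l • p) w) (A p w) 1 := by
      have hGf' : HasFDerivAt (fun z => fderiv ℝ L z w) (A.flip w) ((fun l : ℝ => l • p) 1) := by
        rw [show (fun l : ℝ => l • p) 1 = p by simp]; exact hGf
      exact hGf'.comp_hasDerivAt 1 hγ
    have hψ' : HasDerivAt (fun l : ℝ => fderiv ℝ L (l • p) w) (fderiv ℝ L p w) 1 := by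
      have heq : (fun l : ℝ => fderiv ℝ L (l • p) w) =ᶠ[𝓝 (1:ℝ)]
          (fun l => l * fderiv ℝ L p w) := by
        filter_upwards [Ioi_mem_nhds (zero_lt_one)] with l hl using hscale l hl w
      have h2 : HasDerivAt (fun l : ℝ => l * fderiv ℝ L p w) (fderiv ℝ L p w) 1 := by
        simpa using (hasDerivAt_id (1:ℝ)).mul_const (fderiv ℝ L p w)
      exact h2.congr_of_eventuallyEq heq
    exact hψ.unique hψ'
  -- the Lorentzian form
  obtain ⟨e, he⟩ := hlor p hp
  have hq : ∀ a : Fin 4 → ℝ,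
      (1/2) * A a a = (e a 0)^2 - (e a 1)^2 - (e a 2)^2 - (e a 3)^2 := by
    intro a; rw [← hBapp a a]; exact he a
  have hLp : 0 < L p := hpos p hp
  have hqp : (e p 0)^2 - (e p 1)^2 - (e p 2)^2 - (e p 3)^2 = L p := by
    have h := hq p
    rw [euler2 p, euler1] at h
    linarith
  have hpol : (e p 0)*(e v 0) - (e p 1)*(e v 1) - (e p 2)*(e v 2) - (e p 3)*(e v 3)
      = (1/2) * fderiv ℝ L p v := by
    have h1 := hq (p + v)
    have h2 := hq p
    have h3 := hq v
    have hadd : A (p + v) (p + v) = A p p + A p v + A v p + A v v := by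
      simp only [map_add, ContinuousLinearMap.add_apply]; ring
    rw [hadd] at h1
    simp only [map_add, Pi.add_apply] at h1
    have hs := hsymm p v
    rw [← euler2 v]
    linear_combination (-(1/2:ℝ)) * h1 + (1/2:ℝ) * h2 + (1/2:ℝ) * h3 - (1/4:ℝ) * hs
  have hrcs := rcs (e p 0) (e p 1) (e p 2) (e p 3) (e v 0) (e v 1) (e v 2) (e v 3)
    (by rw [hqp]; exact hLp)
  rw [hqp, hpol] at hrcs
  have hqv := hq v
  rw [hBapp v v]
  have hrcs2 : L p * ((1/2) * A v v) ≤ (1/2 * fderiv ℝ L p v)^2 := by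
    rw [hqv]; exact hrcs
  nlinarith [hrcs2]


private lemma seg_concave {L : (Fin 4 → ℝ) → ℝ} {T : Set (Fin 4 → ℝ)}
    (hTo : IsOpen T) (hLc : Continuous L)
    (hsmooth : ContDiffOn ℝ (⊤ : ℕ∞) L T)
    (hpos : ∀ y ∈ T, 0 < L y)
    (hkey : ∀ p ∈ T, ∀ v : Fin 4 → ℝ,
      2 * L p * fderiv ℝ (fun z => fderiv ℝ L z v) p v ≤ (fderiv ℝ L p v)^2)
    {y z : Fin 4 → ℝ} (hseg : ∀ t ∈ Set.Icc (0:ℝ) 1, y + t • (z - y) ∈ T) :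
    ConcaveOn ℝ (Set.Icc (0:ℝ) 1) (fun t => Real.sqrt (L (y + t • (z - y)))) := by
  set v : Fin 4 → ℝ := z - y with hv
  set γ : ℝ → (Fin 4 → ℝ) := fun t => y + t • v with hγdef
  have hdiff : ∀ w ∈ T, DifferentiableAt ℝ L w := fun w hw =>
    (hsmooth.contDiffAt (hTo.mem_nhds hw)).differentiableAt (by simp)
  have hγc : Continuous γ := by fun_prop
  have hγd : ∀ t : ℝ, HasDerivAt γ v t := by
    intro t
    have h := ((hasDerivAt_id t).smul_const v).const_add y
    simpa [hγdef] using h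
  set g : ℝ → ℝ := fun t => L (γ t) with hgdef
  set g1 : ℝ → ℝ := fun t => fderiv ℝ L (γ t) v with hg1def
  set g2 : ℝ → ℝ := fun t => fderiv ℝ (fun w => fderiv ℝ L w v) (γ t) v with hg2def
  have hgd : ∀ t, γ t ∈ T → HasDerivAt g (g1 t) t := by
    intro t ht
    exact ((hdiff _ ht).hasFDerivAt.comp_hasDerivAt t (hγd t))
  have hg1d : ∀ t, γ t ∈ T → HasDerivAt g1 (g2 t) t := by
    intro t ht
    have hdF : DifferentiableAt ℝ (fderiv ℝ L) (γ t) :=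
      ((hsmooth.contDiffAt (hTo.mem_nhds ht)).fderiv_right
        (WithTop.coe_le_coe.mpr (le_top : (1:ℕ∞) + 1 ≤ ⊤))).differentiableAt one_ne_zero
    have hGdiff : DifferentiableAt ℝ (fun w => fderiv ℝ L w v) (γ t) :=
      hdF.clm_apply (differentiableAt_const v)
    exact hGdiff.hasFDerivAt.comp_hasDerivAt t (hγd t)
  -- concavity of sqrt ∘ g
  have hIcc : Convex ℝ (Set.Icc (0:ℝ) 1) := convex_Icc 0 1
  have hint : interior (Set.Icc (0:ℝ) 1) = Set.Ioo (0:ℝ) 1 := interior_Icc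
  set h : ℝ → ℝ := fun t => Real.sqrt (g t) with hhdef
  set h1 : ℝ → ℝ := fun t => g1 t / (2 * Real.sqrt (g t)) with hh1def
  have hcont : ContinuousOn h (Set.Icc (0:ℝ) 1) :=
    (Real.continuous_sqrt.comp (hLc.comp hγc)).continuousOn
  apply concaveOn_of_hasDerivWithinAt2_nonpos (f' := h1)
    (f'' := fun t => (g2 t * (2 * Real.sqrt (g t)) - g1 t * (2 * (g1 t / (2 * Real.sqrt (g t)))))
        / (2 * Real.sqrt (g t))^2) hIcc hcont
  · intro t ht
    rw [hint] at ht
    have htI : t ∈ Set.Icc (0:ℝ) 1 := Set.mem_Icc_of_Ioo ht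
    have hgpos : 0 < g t := hpos _ (hseg t htI)
    have hd : HasDerivAt h (g1 t / (2 * Real.sqrt (g t))) t :=
      (hgd t (hseg t htI)).sqrt (ne_of_gt hgpos)
    exact hd.hasDerivWithinAt
  · intro t ht
    rw [hint] at ht
    have htI : t ∈ Set.Icc (0:ℝ) 1 := Set.mem_Icc_of_Ioo ht
    have hgpos : 0 < g t := hpos _ (hseg t htI)
    have hs : (0:ℝ) < Real.sqrt (g t) := Real.sqrt_pos.mpr hgpos
    have hden : HasDerivAt (fun t => 2 * Real.sqrt (g t))
        (2 * (g1 t / (2 * Real.sqrt (g t)))) t :=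
      ((hgd t (hseg t htI)).sqrt (ne_of_gt hgpos)).const_mul 2
    have hquo := (hg1d t (hseg t htI)).div hden (by positivity)
    exact hquo.hasDerivWithinAt
  · intro t ht
    rw [hint] at ht
    have htI : t ∈ Set.Icc (0:ℝ) 1 := Set.mem_Icc_of_Ioo ht
    have hmem := hseg t htI
    have hgpos : 0 < g t := hpos _ hmem
    have hs : (0:ℝ) < Real.sqrt (g t) := Real.sqrt_pos.mpr hgpos
    have hsq : Real.sqrt (g t) ^ 2 = g t := Real.sq_sqrt hgpos.le
    have hk := hkey _ hmem v
    -- numerator = (2 * g t * g2 t - g1 t ^2)/ sqrt (g t) ≤ 0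
    have hnum : g2 t * (2 * Real.sqrt (g t)) - g1 t * (2 * (g1 t / (2 * Real.sqrt (g t))))
        = (2 * g t * g2 t - g1 t ^ 2) / Real.sqrt (g t) := by
      field_simp
      linear_combination (2 * g2 t) * hsq
    rw [hnum]
    apply div_nonpos_of_nonpos_of_nonneg
    · apply div_nonpos_of_nonpos_of_nonneg _ hs.le
      have : 2 * L (γ t) * fderiv ℝ (fun w => fderiv ℝ L w v) (γ t) v
          ≤ (fderiv ℝ L (γ t) v)^2 := hk
      simp only [hgdef, hg1def, hg2def]
      linarith [this]
    · positivity




/-- Appendix A of the paper: a connected component `T` of `L⁻¹((0,∞))`, on which the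
positively 2-homogeneous continuous function `L` is smooth with Lorentzian
(signature `(+,−,−,−)`) nondegenerate Hessian quadratic form `v ↦ ½ D²L(y)(v,v)`,
is a convex subset (hence a convex cone) of `ℝ⁴`. -/
theorem timelike_cone_convex (L : (Fin 4 → ℝ) → ℝ) (hLc : Continuous L)
    (hhom : ∀ l : ℝ, 0 < l → ∀ y : Fin 4 → ℝ, L (l • y) = l ^ 2 * L y)
    (x : Fin 4 → ℝ) (hx : x ∈ L ⁻¹' Set.Ioi (0 : ℝ))
    (T : Set (Fin 4 → ℝ)) (hT : T = connectedComponentIn (L ⁻¹' Set.Ioi (0 : ℝ)) x)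
    (hsmooth : ContDiffOn ℝ (⊤ : ℕ∞) L T)
    (hlor : ∀ y ∈ T, ∃ e : (Fin 4 → ℝ) ≃ₗ[ℝ] (Fin 4 → ℝ),
      ∀ v : Fin 4 → ℝ,
        (1 / 2) * fderiv ℝ (fun z => fderiv ℝ L z v) y v =
          (e v 0) ^ 2 - (e v 1) ^ 2 - (e v 2) ^ 2 - (e v 3) ^ 2) :
    Convex ℝ T := by
  set U : Set (Fin 4 → ℝ) := L ⁻¹' Set.Ioi (0:ℝ) with hU
  have hUo : IsOpen U := isOpen_Ioi.preimage hLc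
  have hTsub : T ⊆ U := hT ▸ connectedComponentIn_subset U x
  have hTo : IsOpen T := hT ▸ hUo.connectedComponentIn
  have hpos : ∀ w ∈ T, 0 < L w := fun w hw => hTsub hw
  have hTconn : IsPreconnected T := hT ▸ isPreconnected_connectedComponentIn
  have hTcc : ∀ w ∈ T, connectedComponentIn U w = T := by
    intro w hw
    rw [hT]
    exact (connectedComponentIn_eq (show w ∈ connectedComponentIn U x from hT ▸ hw)).symm
  have hcone : ∀ l : ℝ, 0 < l → ∀ w ∈ T, l • w ∈ T := by
    intro l hl w hw
    have hwU : IsPreconnected ((fun μ : ℝ => μ • w) '' Set.uIcc l 1) :=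
      isPreconnected_uIcc.image _ (Continuous.continuousOn (by fun_prop))
    have hsubU : ((fun μ : ℝ => μ • w) '' Set.uIcc l 1) ⊆ U := by
      rintro _ ⟨μ, hμ, rfl⟩
      have hμpos : 0 < μ := by
        rcases Set.mem_uIcc.mp hμ with ⟨h1, _⟩ | ⟨h1, _⟩ <;> linarith
      have hLw : 0 < L w := hpos w hw
      show L (μ • w) ∈ Set.Ioi (0:ℝ)
      rw [Set.mem_Ioi, hhom μ hμpos w]
      positivity
    have hwmem : w ∈ ((fun μ : ℝ => μ • w) '' Set.uIcc l 1) :=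
      ⟨1, Set.right_mem_uIcc, one_smul ℝ w⟩
    have hsub := hwU.subset_connectedComponentIn hwmem hsubU
    have hin := hsub ⟨l, Set.left_mem_uIcc, rfl⟩
    rwa [hTcc w hw] at hin
  have hkey : ∀ p ∈ T, ∀ v : Fin 4 → ℝ,
      2 * L p * fderiv ℝ (fun z => fderiv ℝ L z v) p v ≤ (fderiv ℝ L p v)^2 :=
    fun p hp v => key hTo hhom hcone hsmooth hlor hpos hp v
  -- main argument
  intro p hp q hq a b ha hb hab
  set S : Set (Fin 4 → ℝ) :=
    {w | w ∈ T ∧ ∀ t ∈ Set.Icc (0:ℝ) 1, p + t • (w - p) ∈ T} with hS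
  have hpS : p ∈ S := ⟨hp, fun t _ => by simpa using hp⟩
  have hSopen : IsOpen S := by
    rw [Metric.isOpen_iff]
    rintro w ⟨hwT, hwseg⟩
    have hK : IsCompact ((fun t : ℝ => p + t • (w - p)) '' Set.Icc 0 1) :=
      isCompact_Icc.image (by fun_prop)
    have hKT : ((fun t : ℝ => p + t • (w - p)) '' Set.Icc 0 1) ⊆ T := by
      rintro _ ⟨t, ht, rfl⟩; exact hwseg t ht
    obtain ⟨δ, hδ, hthick⟩ := hK.exists_thickening_subset_open hTo hKT
    refine ⟨δ, hδ, ?_⟩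
    intro w' hw'
    have hw'seg : ∀ t ∈ Set.Icc (0:ℝ) 1, p + t • (w' - p) ∈ T := by
      intro t ht
      apply hthick
      rw [Metric.mem_thickening_iff]
      refine ⟨p + t • (w - p), ⟨t, ht, rfl⟩, ?_⟩
      have hdiffpt : (p + t • (w' - p)) - (p + t • (w - p)) = t • (w' - w) := by
        module
      rw [dist_eq_norm, hdiffpt, norm_smul]
      have h1 : ‖t‖ ≤ 1 := by
        rw [Real.norm_eq_abs, abs_of_nonneg ht.1]; exact ht.2
      calc ‖t‖ * ‖w' - w‖ ≤ 1 * ‖w' - w‖ :=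
            mul_le_mul_of_nonneg_right h1 (norm_nonneg _)
        _ = dist w' w := by rw [one_mul, dist_eq_norm]
        _ < δ := hw'
    have hw'T : w' ∈ T := by
      have := hw'seg 1 (Set.right_mem_Icc.mpr zero_le_one)
      simpa using this
    exact ⟨hw'T, hw'seg⟩
  have hPcl : ∀ w ∈ closure S, ∀ t ∈ Set.Icc (0:ℝ) 1,
      (1-t) * Real.sqrt (L p) + t * Real.sqrt (L w)
        ≤ Real.sqrt (L (p + t • (w - p))) := by
    intro w hw t ht
    have hclosed : IsClosed {w' : Fin 4 → ℝ |
        (1-t) * Real.sqrt (L p) + t * Real.sqrt (L w')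
          ≤ Real.sqrt (L (p + t • (w' - p)))} := by
      apply isClosed_le
      · exact continuous_const.add
          (continuous_const.mul (Real.continuous_sqrt.comp hLc))
      · exact Real.continuous_sqrt.comp (hLc.comp
          (continuous_const.add ((continuous_id.sub continuous_const).const_smul t)))
    have hsubset : S ⊆ {w' : Fin 4 → ℝ |
        (1-t) * Real.sqrt (L p) + t * Real.sqrt (L w')
          ≤ Real.sqrt (L (p + t • (w' - p)))} := by
      intro w' hw'
      have hconc := seg_concave hTo hLc hsmooth hpos hkey hw'.2
      have h0m : (0:ℝ) ∈ Set.Icc (0:ℝ) 1 := Set.left_mem_Icc.mpr zero_le_one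
      have h1m : (1:ℝ) ∈ Set.Icc (0:ℝ) 1 := Set.right_mem_Icc.mpr zero_le_one
      have hcineq := hconc.2 h0m h1m (by linarith [ht.2] : (0:ℝ) ≤ 1 - t) ht.1 (by ring)
      have e0 : p + (0:ℝ) • (w' - p) = p := by simp
      have e1 : p + (1:ℝ) • (w' - p) = w' := by simp
      have e2 : (1-t) • (0:ℝ) + t • (1:ℝ) = t := by simp
      rw [e2] at hcineq
      simp only [e0, e1, smul_eq_mul] at hcineq
      exact hcineq
    exact (hclosed.closure_subset_iff.mpr hsubset) hw
  have hTS : T ⊆ S := by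
    apply hTconn.subset_left_of_subset_union hSopen isClosed_closure.isOpen_compl
      (disjoint_compl_right.mono_left subset_closure) ?_ ⟨p, hp, hpS⟩
    intro w hw
    by_cases hcl : w ∈ closure S
    · left
      have hsqLp : 0 < Real.sqrt (L p) := Real.sqrt_pos.mpr (hpos p hp)
      have hsqLw : 0 < Real.sqrt (L w) := Real.sqrt_pos.mpr (hpos w hw)
      have hsegU : ∀ t ∈ Set.Icc (0:ℝ) 1, p + t • (w - p) ∈ U := by
        intro t ht
        have hineq := hPcl w hcl t ht
        have hposc : 0 < (1-t) * Real.sqrt (L p) + t * Real.sqrt (L w) := by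
          rcases eq_or_lt_of_le ht.1 with h0 | h0
          · rw [← h0]; simpa using hsqLp
          · have hb1 : 0 < t * Real.sqrt (L w) := mul_pos h0 hsqLw
            have hb2 : 0 ≤ (1-t) * Real.sqrt (L p) :=
              mul_nonneg (by linarith [ht.2]) hsqLp.le
            linarith
        have hsq : 0 < Real.sqrt (L (p + t • (w - p))) := lt_of_lt_of_le hposc hineq
        exact Real.sqrt_pos.mp hsq
      have himg : IsPreconnected ((fun t : ℝ => p + t • (w - p)) '' Set.Icc 0 1) :=
        isPreconnected_Icc.image _ (Continuous.continuousOn (by fun_prop))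
      have hpmem : p ∈ ((fun t : ℝ => p + t • (w - p)) '' Set.Icc 0 1) :=
        ⟨0, Set.left_mem_Icc.mpr zero_le_one, by simp⟩
      have hsubU : ((fun t : ℝ => p + t • (w - p)) '' Set.Icc 0 1) ⊆ U := by
        rintro _ ⟨t, ht, rfl⟩; exact hsegU t ht
      have hsub := himg.subset_connectedComponentIn hpmem hsubU
      rw [hTcc p hp] at hsub
      refine ⟨hw, fun t ht => hsub ⟨t, ht, rfl⟩⟩
    · right; exact hcl
  have hqS : q ∈ S := hTS hq
  have hmem := hqS.2 b ⟨hb, by linarith⟩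
  have hrewrite : a • p + b • q = p + b • (q - p) := by
    have ha' : a = 1 - b := by linarith
    rw [ha', smul_sub, sub_smul, one_smul]; abel
  rw [hrewrite]
  exact hmem
end

section
/- Let g be a nondegenerate symmetric bilinear form on ℝ⁴ with matrix (g_{ab}) and A a linear form with components A_a; write g(y,y) = Σ g_{ab}y^a y^b and A(y) = Σ A_a y^a. Define the Randers Lagrangian L(y) = (√(g(y,y)) + A(y))² on the open set {y : g(y,y) > 0}, and let g^L(y) be the 4×4 matrix with entries g^L_{ab}(y) = (1/2)∂²L/∂y^a∂y^b(y). Then for every y with g(y,y) > 0, det(g^L(y)) = det(g_{ab}) · (√(g(y,y)) + A(y))⁵ / (g(y,y))^{5/2}. -/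
/-!
On the timelike cone the Randers Lagrangian is `L = F²` with `F = √(g(y,y)) + A(y)` smooth, so
`g^L = dF ⊗ dF + F · ∇²F`. With `s = √(g(y,y))` and `v = g y` one finds `dF = w := v/s + A` and
`∇²F = (g - v vᵀ/s²)/s`, hence `g^L = (F/s) g + w wᵀ - (F/s³) v vᵀ`: a multiple of `g` plus a
rank-two matrix. The matrix determinant lemma reduces `det g^L` to `det g · (F/s)ⁿ` times a 2×2
determinant which, by `g⁻¹ v = y`, `w ⬝ y = F` and `v ⬝ y = s²`, equals `F/s`; so
`det g^L = det g · (F/s)ⁿ⁺¹` in dimension `n`. When `F = 0` both sides vanish, as `g^L = w wᵀ`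
then annihilates `y`.
-/

noncomputable section

/-- The quadratic form `g(y,y) = Σ g_{ab} y^a y^b` of a 4×4 matrix. -/
def quadForm (g : Matrix (Fin 4) (Fin 4) ℝ) (y : Fin 4 → ℝ) : ℝ :=
  ∑ a, ∑ b, g a b * y a * y b

/-- The linear form `A(y) = Σ A_a y^a`. -/
def linForm (A : Fin 4 → ℝ) (y : Fin 4 → ℝ) : ℝ := ∑ a, A a * y a

/-- The L-metric: the matrix `g^L_{ab}(y) = (1/2) ∂²L/∂y^a∂y^b (y)`. -/
def Lmetric (L : (Fin 4 → ℝ) → ℝ) (y : Fin 4 → ℝ) : Matrix (Fin 4) (Fin 4) ℝ :=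
  Matrix.of fun a b =>
    (1 / 2) * fderiv ℝ (fun z => fderiv ℝ L z (Pi.single b 1)) y (Pi.single a 1)

open Matrix

namespace Matrix

theorem of_mul_mul_transpose_of_apply {R ι n : Type*} [NonUnitalSemiring R] [Fintype ι]
    (r c : n → ι → R) (N : Matrix ι ι R) (k l : n) :
    (of r * N * (of c)ᵀ) k l = r k ⬝ᵥ N *ᵥ c l := by
  rw [Matrix.mul_assoc]
  simp [mul_apply, dotProduct, mulVec, Finset.mul_sum]

variable {K ι : Type*} [Field K] [Fintype ι] [DecidableEq ι]

theorem det_eq_zero_of_vecMulVec_self_of_dotProduct_eq_zero {w y : ι → K} (hy : y ≠ 0)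
    (hwy : w ⬝ᵥ y = 0) : (vecMulVec w w).det = 0 :=
  exists_mulVec_eq_zero_iff.mp ⟨y, hy, by simp [vecMulVec_mulVec, hwy]⟩

theorem det_smul_sub_add_vecMulVec {g : Matrix ι ι K} (hg : g.IsSymm) (hdet : g.det ≠ 0)
    {y : ι → K} {s : K} (hs : s ≠ 0) (hys : y ⬝ᵥ g *ᵥ y = s ^ 2) (w : ι → K) :
    ((w ⬝ᵥ y / s) • (g - (s ^ 2)⁻¹ • vecMulVec (g *ᵥ y) (g *ᵥ y)) + vecMulVec w w).det =
      g.det * (w ⬝ᵥ y / s) ^ (Fintype.card ι + 1) := by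
  set F := w ⬝ᵥ y
  set v := g *ᵥ y
  rcases eq_or_ne F 0 with hF | hF
  · have hy : y ≠ 0 := by
      rintro rfl
      exact hs (pow_eq_zero_iff two_ne_zero |>.mp (by simpa using hys.symm))
    rw [hF, zero_div, zero_smul, zero_add,
      det_eq_zero_of_vecMulVec_self_of_dotProduct_eq_zero hy hF]
    simp
  have hu : IsUnit g.det := hdet.isUnit
  have hinv_v : g⁻¹ *ᵥ v = y := by simp [v, mulVec_mulVec, nonsing_inv_mul g hu]
  have hv_inv : v ᵥ* g⁻¹ = y := by
    rw [← mulVec_transpose, transpose_nonsing_inv, hg.eq, hinv_v]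
  have hvw : v ⬝ᵥ g⁻¹ *ᵥ w = F := by rw [dotProduct_mulVec, hv_inv, dotProduct_comm]
  have hvv : v ⬝ᵥ y = s ^ 2 := by rw [dotProduct_comm, hys]
  set α := F / s
  have hFα : F = α * s := (div_mul_cancel₀ F hs).symm
  have hα : α ≠ 0 := div_ne_zero hF hs
  set B : Matrix ι (Fin 2) K := (of ![w, v])ᵀ
  set C : Matrix (Fin 2) ι K := of ![α⁻¹ • w, -(s ^ 2)⁻¹ • v]
  have hM : α • (g - (s ^ 2)⁻¹ • vecMulVec v v) + vecMulVec w w = α • (g + B * C) := by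
    ext i j
    simp only [Matrix.add_apply, Matrix.smul_apply, Matrix.sub_apply, vecMulVec_apply,
      smul_eq_mul, neg_smul, mul_apply, transpose_apply, of_apply, cons_val', cons_val_fin_one,
      Pi.smul_apply, Pi.neg_apply, Fin.sum_univ_two, cons_val_zero, cons_val_one, mul_neg, B, C]
    field_simp
    ring
  have hCB : 1 + C * g⁻¹ * B = !![1 + α⁻¹ * (w ⬝ᵥ g⁻¹ *ᵥ w), α⁻¹ * F; -(s ^ 2)⁻¹ * F, 0] := by
    ext k l
    rw [add_apply, of_mul_mul_transpose_of_apply]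
    fin_cases k <;> fin_cases l <;> simp [hinv_v, hvw, hvv, F, hs]
  rw [hM, det_smul, det_add_mul B C hu, hCB, det_fin_two_of, hFα]
  field_simp
  ring

end Matrix

section Calculus

variable {ι : Type*} [Fintype ι]

def dotProductCLM (v : ι → ℝ) : (ι → ℝ) →L[ℝ] ℝ :=
  LinearMap.toContinuousLinearMap (dotProductBilin ℝ ℝ v)

@[simp] theorem dotProductCLM_apply (v h : ι → ℝ) : dotProductCLM v h = v ⬝ᵥ h := rfl

theorem hasFDerivAt_dotProduct (v z : ι → ℝ) :
    HasFDerivAt (fun z => v ⬝ᵥ z) (dotProductCLM v) z :=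
  (dotProductCLM v).hasFDerivAt

theorem hasFDerivAt_dotProduct_mulVec_self {g : Matrix ι ι ℝ} (hg : g.IsSymm) (z : ι → ℝ) :
    HasFDerivAt (fun z => z ⬝ᵥ g *ᵥ z) (dotProductCLM ((2 : ℝ) • g *ᵥ z)) z := by
  have h := HasFDerivAt.fun_sum (u := Finset.univ) fun i _ =>
    (hasFDerivAt_apply i z).mul (hasFDerivAt_dotProduct (g i) z)
  refine h.congr_fderiv (ContinuousLinearMap.ext fun u => ?_)
  have hsymm : z ⬝ᵥ g *ᵥ u = g *ᵥ z ⬝ᵥ u := by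
    rw [dotProduct_mulVec, ← mulVec_transpose, hg.eq]
  simp only [_root_.sum_apply, _root_.add_apply, _root_.smul_apply,
    dotProductCLM_apply, ContinuousLinearMap.proj_apply,
    smul_eq_mul, Finset.sum_add_distrib]
  change z ⬝ᵥ g *ᵥ u + g *ᵥ z ⬝ᵥ u = _
  rw [hsymm, smul_dotProduct, smul_eq_mul, two_mul]

theorem hasFDerivAt_fderiv_apply_of_eqOn_sq {E : Type*} [NormedAddCommGroup E] [NormedSpace ℝ E]
    {F L : E → ℝ} {F' : E → E →L[ℝ] ℝ} {F'' : E →L[ℝ] ℝ} {U : Set E} {y v : E}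
    (hU : IsOpen U) (hy : y ∈ U) (hL : Set.EqOn L (fun z => F z ^ 2) U)
    (hF : ∀ z ∈ U, HasFDerivAt F (F' z) z) (hF' : HasFDerivAt (fun z => F' z v) F'' y) :
    HasFDerivAt (fun z => fderiv ℝ L z v) ((2 : ℝ) • (F' y v • F' y + F y • F'')) y := by
  have hLz : ∀ z ∈ U, fderiv ℝ L z v = 2 * (F z * F' z v) := fun z hz => by
    have hsq := (hF z hz).pow 2
    rw [(hsq.congr_of_eventuallyEq (hL.eventuallyEq_of_mem (hU.mem_nhds hz))).fderiv]
    simp [mul_assoc]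
  refine (((hF y hy).mul hF').const_mul 2).congr_of_eventuallyEq ?_ |>.congr_fderiv ?_
  · filter_upwards [hU.mem_nhds hy] with z hz using hLz z hz
  · ext u
    simp only [smul_add, _root_.add_apply, _root_.smul_apply, smul_eq_mul]
    ring

def randers (g : Matrix ι ι ℝ) (A z : ι → ℝ) : ℝ := √(z ⬝ᵥ g *ᵥ z) + A ⬝ᵥ z

def randersGrad (g : Matrix ι ι ℝ) (A z : ι → ℝ) : ι → ℝ :=
  (√(z ⬝ᵥ g *ᵥ z))⁻¹ • g *ᵥ z + A

-- No sign condition is needed: where `g(z,z) ≤ 0` the square root is `0` and both sides are `A ⬝ᵥ z`.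
theorem randersGrad_dotProduct_self (g : Matrix ι ι ℝ) (A z : ι → ℝ) :
    randersGrad g A z ⬝ᵥ z = randers g A z := by
  rw [randersGrad, add_dotProduct, smul_dotProduct, dotProduct_comm (g *ᵥ z), smul_eq_mul,
    inv_mul_eq_div, Real.div_sqrt, randers]

theorem hasFDerivAt_sqrt_dotProduct_mulVec_self {g : Matrix ι ι ℝ} (hg : g.IsSymm) {z : ι → ℝ}
    (hz : 0 < z ⬝ᵥ g *ᵥ z) :
    HasFDerivAt (fun z => √(z ⬝ᵥ g *ᵥ z)) (dotProductCLM ((√(z ⬝ᵥ g *ᵥ z))⁻¹ • g *ᵥ z)) z := by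
  refine (Real.hasDerivAt_sqrt hz.ne').comp_hasFDerivAt z
    (hasFDerivAt_dotProduct_mulVec_self hg z) |>.congr_fderiv (ContinuousLinearMap.ext fun u => ?_)
  have : √(z ⬝ᵥ g *ᵥ z) ≠ 0 := (Real.sqrt_pos.2 hz).ne'
  simp only [one_div, _root_.mul_inv_rev, _root_.smul_apply, dotProductCLM_apply,
    smul_dotProduct, smul_eq_mul]
  field_simp

theorem hasFDerivAt_randers {g : Matrix ι ι ℝ} (hg : g.IsSymm) (A : ι → ℝ) {z : ι → ℝ}
    (hz : 0 < z ⬝ᵥ g *ᵥ z) :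
    HasFDerivAt (randers g A) (dotProductCLM (randersGrad g A z)) z := by
  refine (hasFDerivAt_sqrt_dotProduct_mulVec_self hg hz).add (hasFDerivAt_dotProduct A z)
    |>.congr_fderiv (ContinuousLinearMap.ext fun u => ?_)
  simp [randersGrad, add_dotProduct]

theorem hasFDerivAt_randersGrad_apply {g : Matrix ι ι ℝ} (hg : g.IsSymm) (A : ι → ℝ)
    {z : ι → ℝ} (hz : 0 < z ⬝ᵥ g *ᵥ z) (b : ι) :
    HasFDerivAt (fun z => randersGrad g A z b)
      (dotProductCLM ((√(z ⬝ᵥ g *ᵥ z))⁻¹ • g b -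
        ((g *ᵥ z) b / √(z ⬝ᵥ g *ᵥ z) ^ 3) • g *ᵥ z)) z := by
  have hs : √(z ⬝ᵥ g *ᵥ z) ≠ 0 := (Real.sqrt_pos.2 hz).ne'
  refine (((hasDerivAt_inv hs).comp_hasFDerivAt z
    (hasFDerivAt_sqrt_dotProduct_mulVec_self hg hz)).mul
    (hasFDerivAt_dotProduct (g b) z)).add_const (A b)
    |>.congr_fderiv (ContinuousLinearMap.ext fun u => ?_)
  simp only [Function.comp_apply, neg_smul, smul_neg, _root_.add_apply, _root_.smul_apply,
    dotProductCLM_apply, smul_eq_mul, _root_.neg_apply, smul_dotProduct, sub_dotProduct]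
  field_simp
  rw [show g b ⬝ᵥ z = (g *ᵥ z) b from rfl]
  ring

end Calculus

section RandersMetric

variable {ι : Type*} [Fintype ι] [DecidableEq ι]

def randersMetric (g : Matrix ι ι ℝ) (A y : ι → ℝ) : Matrix ι ι ℝ :=
  (randers g A y / √(y ⬝ᵥ g *ᵥ y)) •
      (g - (√(y ⬝ᵥ g *ᵥ y) ^ 2)⁻¹ • vecMulVec (g *ᵥ y) (g *ᵥ y)) +
    vecMulVec (randersGrad g A y) (randersGrad g A y)

theorem fderiv_fderiv_single_eq_randersMetric {g : Matrix ι ι ℝ} (hg : g.IsSymm) {A : ι → ℝ}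
    {L : (ι → ℝ) → ℝ} (hL : ∀ z, 0 < z ⬝ᵥ g *ᵥ z → L z = randers g A z ^ 2) {y : ι → ℝ}
    (hy : 0 < y ⬝ᵥ g *ᵥ y) (a b : ι) :
    fderiv ℝ (fun z => fderiv ℝ L z (Pi.single b 1)) y (Pi.single a 1) =
      2 * randersMetric g A y a b := by
  have hU : IsOpen {z : ι → ℝ | 0 < z ⬝ᵥ g *ᵥ z} :=
    isOpen_lt continuous_const <| continuous_iff_continuousAt.2 fun z =>
      (hasFDerivAt_dotProduct_mulVec_self hg z).continuousAt
  have hGrad : HasFDerivAt (fun z => dotProductCLM (randersGrad g A z) (Pi.single b 1)) _ y :=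
    (hasFDerivAt_randersGrad_apply hg A hy b).congr_of_eventuallyEq
      (.of_forall fun z => dotProduct_single_one (randersGrad g A z) b)
  have hs : √(y ⬝ᵥ g *ᵥ y) ≠ 0 := (Real.sqrt_pos.2 hy).ne'
  rw [(hasFDerivAt_fderiv_apply_of_eqOn_sq hU hy hL (fun z hz => hasFDerivAt_randers hg A hz)
    hGrad).fderiv]
  simp only [dotProductCLM_apply, dotProduct_single, mul_one, smul_add, _root_.add_apply,
    _root_.smul_apply, smul_eq_mul, Pi.sub_apply, Pi.smul_apply, hg.apply a b, randersMetric,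
    Matrix.add_apply, Matrix.smul_apply, Matrix.sub_apply, vecMulVec_apply]
  field_simp
  ring

theorem det_randersMetric {g : Matrix ι ι ℝ} (hg : g.IsSymm) (hdet : g.det ≠ 0) (A : ι → ℝ)
    {y : ι → ℝ} (hy : 0 < y ⬝ᵥ g *ᵥ y) :
    (randersMetric g A y).det =
      g.det * (randers g A y / √(y ⬝ᵥ g *ᵥ y)) ^ (Fintype.card ι + 1) := by
  rw [randersMetric, ← randersGrad_dotProduct_self]
  exact det_smul_sub_add_vecMulVec hg hdet (Real.sqrt_pos.2 hy).ne' (Real.sq_sqrt hy.le).symm _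

end RandersMetric

theorem quadForm_eq_dotProduct (g : Matrix (Fin 4) (Fin 4) ℝ) (y : Fin 4 → ℝ) :
    quadForm g y = y ⬝ᵥ g *ᵥ y := by
  simp only [quadForm, dotProduct, mulVec, Finset.mul_sum]
  exact Finset.sum_congr rfl fun a _ => Finset.sum_congr rfl fun b _ => by ring

theorem linForm_eq_dotProduct (A y : Fin 4 → ℝ) : linForm A y = A ⬝ᵥ y := rfl

/-- Determinant of the L-metric of the Randers Lagrangian
`L = (√(g(y,y)) + A(y))²` on the set of `g`-timelike vectors:
`det g^L = det g · (√(g(y,y)) + A(y))⁵ / g(y,y)^{5/2}`. -/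
theorem randers_det_timelike (g : Matrix (Fin 4) (Fin 4) ℝ) (hgs : g.IsSymm)
    (hgdet : g.det ≠ 0) (A : Fin 4 → ℝ) (L : (Fin 4 → ℝ) → ℝ)
    (hLdef : ∀ y : Fin 4 → ℝ, 0 < quadForm g y →
      L y = (Real.sqrt (quadForm g y) + linForm A y) ^ 2) :
    ∀ y : Fin 4 → ℝ, 0 < quadForm g y →
      (Lmetric L y).det =
        g.det * (Real.sqrt (quadForm g y) + linForm A y) ^ 5 /
          (quadForm g y) ^ ((5 : ℝ) / 2) := by
  simp only [quadForm_eq_dotProduct, linForm_eq_dotProduct] at hLdef ⊢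
  intro y hy
  have hLmetric : Lmetric L y = randersMetric g A y := by
    ext a b
    rw [Lmetric, of_apply, fderiv_fderiv_single_eq_randersMetric hgs hLdef hy]
    ring
  rw [hLmetric, det_randersMetric hgs hgdet A hy, Real.rpow_div_two_eq_sqrt _ hy.le]
  rw [randers, Fintype.card_fin, div_pow, mul_div_assoc]
  norm_num
end
end
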